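/- For every ENF type e, every term N of type e with a free variable x of sum type c+d (with c ∈ CNF, d ∈ DNF), every term M of type c+d, and fresh variables x₁, x₂ ∉ FV(N), the unrestricted sum eta equation N{M/x} = δ(M, x₁.N{ι₁x₁/x}, x₂.N{ι₂x₂/x}) is derivable in the restricted theory =βη^e. The proof is by induction on the structure of e: the case e = d is the axiom (η+^e); the case e = (c'→b)×c₀ uses (η×^e), the induction hypothesis, and (η_π^e); the case e = c'→b uses (η→^e), (η+^e), (η_λ^e), and (η→^e) again. -/

import Mathlib

namespace ExpLog

-- Types generated by atoms, arrows, products and sums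
-- (together with the unit type, the empty product).
inductive Ty : Type
  | atom : ℕ → Ty
  | unit : Ty
  | arr  : Ty → Ty → Ty
  | prod : Ty → Ty → Ty
  | sum  : Ty → Ty → Ty
  deriving Repr, DecidableEq
abbrev Ctx := List Ty

-- Typed de Bruijn indices.
inductive Var : Ctx → Ty → Type
  | vz {Γ A} : Var (A :: Γ) A
  | vs {Γ A B} : Var Γ A → Var (B :: Γ) A

-- Intrinsically typed terms of the lambda calculus with sums, products (and unit).
inductive Tm : Ctx → Ty → Type
  | var  {Γ A} : Var Γ A → Tm Γ A
  | lam  {Γ A B} : Tm (A :: Γ) B → Tm Γ (Ty.arr A B)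
  | app  {Γ A B} : Tm Γ (Ty.arr A B) → Tm Γ A → Tm Γ B
  | pair {Γ A B} : Tm Γ A → Tm Γ B → Tm Γ (Ty.prod A B)
  | fst  {Γ A B} : Tm Γ (Ty.prod A B) → Tm Γ A
  | snd  {Γ A B} : Tm Γ (Ty.prod A B) → Tm Γ B
  | inl  {Γ A B} : Tm Γ A → Tm Γ (Ty.sum A B)
  | inr  {Γ A B} : Tm Γ B → Tm Γ (Ty.sum A B)
  | case {Γ A B C} : Tm Γ (Ty.sum A B) → Tm (A :: Γ) C → Tm (B :: Γ) C → Tm Γ C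
  | star {Γ} : Tm Γ Ty.unit

-- Renamings and substitutions.
def Ren (Γ Δ : Ctx) : Type := ∀ A, Var Γ A → Var Δ A

def Ren.lift {Γ Δ A} (ρ : Ren Γ Δ) : Ren (A :: Γ) (A :: Δ) := fun B x =>
  match x with
  | .vz => .vz
  | .vs y => .vs (ρ B y)

def Tm.rename : ∀ {Γ Δ : Ctx} {A}, Ren Γ Δ → Tm Γ A → Tm Δ A
  | _, _, _, ρ, .var x => .var (ρ _ x)
  | _, _, _, ρ, .lam t => .lam (Tm.rename (Ren.lift ρ) t)
  | _, _, _, ρ, .app t u => .app (Tm.rename ρ t) (Tm.rename ρ u)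
  | _, _, _, ρ, .pair t u => .pair (Tm.rename ρ t) (Tm.rename ρ u)
  | _, _, _, ρ, .fst t => .fst (Tm.rename ρ t)
  | _, _, _, ρ, .snd t => .snd (Tm.rename ρ t)
  | _, _, _, ρ, .inl t => .inl (Tm.rename ρ t)
  | _, _, _, ρ, .inr t => .inr (Tm.rename ρ t)
  | _, _, _, ρ, .case s t u =>
      .case (Tm.rename ρ s) (Tm.rename (Ren.lift ρ) t) (Tm.rename (Ren.lift ρ) u)
  | _, _, _, _, .star => .star

/-- Weakening of a term by one extra hypothesis. -/
def Tm.wk {Γ A B} (t : Tm Γ A) : Tm (B :: Γ) A := Tm.rename (fun _ v => .vs v) t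

def Sub (Γ Δ : Ctx) : Type := ∀ A, Var Γ A → Tm Δ A

def Sub.lift {Γ Δ A} (σ : Sub Γ Δ) : Sub (A :: Γ) (A :: Δ) := fun B x =>
  match x with
  | .vz => .var .vz
  | .vs y => Tm.wk (σ B y)

def Tm.subst : ∀ {Γ Δ : Ctx} {A}, Sub Γ Δ → Tm Γ A → Tm Δ A
  | _, _, _, σ, .var x => σ _ x
  | _, _, _, σ, .lam t => .lam (Tm.subst (Sub.lift σ) t)
  | _, _, _, σ, .app t u => .app (Tm.subst σ t) (Tm.subst σ u)
  | _, _, _, σ, .pair t u => .pair (Tm.subst σ t) (Tm.subst σ u)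
  | _, _, _, σ, .fst t => .fst (Tm.subst σ t)
  | _, _, _, σ, .snd t => .snd (Tm.subst σ t)
  | _, _, _, σ, .inl t => .inl (Tm.subst σ t)
  | _, _, _, σ, .inr t => .inr (Tm.subst σ t)
  | _, _, _, σ, .case s t u =>
      .case (Tm.subst σ s) (Tm.subst (Sub.lift σ) t) (Tm.subst (Sub.lift σ) u)
  | _, _, _, _, .star => .star

/-- Substitution of a single term for de Bruijn index 0. -/
def Sub.single {Γ A} (u : Tm Γ A) : Sub (A :: Γ) Γ := fun B x =>
  match x with
  | .vz => u
  | .vs y => .var y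

/-- `t.subst1 u` is `t{u/x}` where `x` is de Bruijn index 0. -/
def Tm.subst1 {Γ A B} (t : Tm (A :: Γ) B) (u : Tm Γ A) : Tm Γ B := Tm.subst (Sub.single u) t

/-- The substitution `{ι₁ x₁ / x}` (for the top variable of sum type). -/
def Sub.inlTop {Γ A B} : Sub (Ty.sum A B :: Γ) (A :: Γ) := fun C x =>
  match x with
  | .vz => .inl (.var .vz)
  | .vs y => .var (.vs y)

/-- The substitution `{ι₂ x₂ / x}` (for the top variable of sum type). -/
def Sub.inrTop {Γ A B} : Sub (Ty.sum A B :: Γ) (B :: Γ) := fun C x =>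
  match x with
  | .vz => .inr (.var .vz)
  | .vs y => .var (.vs y)

/-- Exchange of the two topmost hypotheses. -/
def Ren.swap {Γ A B} : Ren (A :: B :: Γ) (B :: A :: Γ) := fun C x =>
  match x with
  | .vz => .vs .vz
  | .vs .vz => .vz
  | .vs (.vs y) => .vs (.vs y)

-- The standard equational theory =βη of the lambda calculus with sums
-- (with the eta law for the unit type, the nullary product).
inductive Jeq : ∀ {Γ : Ctx} {A : Ty}, Tm Γ A → Tm Γ A → Prop
  | refl {Γ A} (t : Tm Γ A) : Jeq t t
  | symm {Γ A} {t u : Tm Γ A} : Jeq t u → Jeq u t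
  | trans {Γ A} {t u v : Tm Γ A} : Jeq t u → Jeq u v → Jeq t v
  | lam_congr {Γ A B} {t t' : Tm (A :: Γ) B} : Jeq t t' → Jeq (Tm.lam t) (Tm.lam t')
  | app_congr {Γ A B} {t t' : Tm Γ (Ty.arr A B)} {u u' : Tm Γ A} :
      Jeq t t' → Jeq u u' → Jeq (Tm.app t u) (Tm.app t' u')
  | pair_congr {Γ A B} {t t' : Tm Γ A} {u u' : Tm Γ B} :
      Jeq t t' → Jeq u u' → Jeq (Tm.pair t u) (Tm.pair t' u')
  | fst_congr {Γ A B} {t t' : Tm Γ (Ty.prod A B)} : Jeq t t' → Jeq (Tm.fst t) (Tm.fst t')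
  | snd_congr {Γ A B} {t t' : Tm Γ (Ty.prod A B)} : Jeq t t' → Jeq (Tm.snd t) (Tm.snd t')
  | inl_congr {Γ A B} {t t' : Tm Γ A} : Jeq t t' → Jeq (Tm.inl (B := B) t) (Tm.inl t')
  | inr_congr {Γ A B} {t t' : Tm Γ B} : Jeq t t' → Jeq (Tm.inr (A := A) t) (Tm.inr t')
  | case_congr {Γ A B C} {s s' : Tm Γ (Ty.sum A B)} {t t' : Tm (A :: Γ) C} {u u' : Tm (B :: Γ) C} :
      Jeq s s' → Jeq t t' → Jeq u u' → Jeq (Tm.case s t u) (Tm.case s' t' u')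
  | beta_arr {Γ A B} (t : Tm (A :: Γ) B) (u : Tm Γ A) :
      Jeq (Tm.app (Tm.lam t) u) (Tm.subst1 t u)
  | beta_fst {Γ A B} (t : Tm Γ A) (u : Tm Γ B) : Jeq (Tm.fst (Tm.pair t u)) t
  | beta_snd {Γ A B} (t : Tm Γ A) (u : Tm Γ B) : Jeq (Tm.snd (Tm.pair t u)) u
  | beta_inl {Γ A B C} (m : Tm Γ A) (n₁ : Tm (A :: Γ) C) (n₂ : Tm (B :: Γ) C) :
      Jeq (Tm.case (Tm.inl m) n₁ n₂) (Tm.subst1 n₁ m)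
  | beta_inr {Γ A B C} (m : Tm Γ B) (n₁ : Tm (A :: Γ) C) (n₂ : Tm (B :: Γ) C) :
      Jeq (Tm.case (Tm.inr m) n₁ n₂) (Tm.subst1 n₂ m)
  | eta_arr {Γ A B} (t : Tm Γ (Ty.arr A B)) :
      Jeq t (Tm.lam (Tm.app (Tm.wk t) (Tm.var .vz)))
  | eta_prod {Γ A B} (t : Tm Γ (Ty.prod A B)) : Jeq t (Tm.pair (Tm.fst t) (Tm.snd t))
  | eta_sum {Γ A B C} (n : Tm (Ty.sum A B :: Γ) C) (m : Tm Γ (Ty.sum A B)) :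
      Jeq (Tm.subst1 n m)
          (Tm.case m (Tm.subst Sub.inlTop n) (Tm.subst Sub.inrTop n))
  | eta_unit {Γ} (t : Tm Γ Ty.unit) : Jeq t Tm.star

/-- Type isomorphism: a pair of closed coercions whose compositions are βη-equal
to the identity. -/
def Iso (τ σ : Ty) : Prop :=
  ∃ (M : Tm [] (Ty.arr σ τ)) (N : Tm [] (Ty.arr τ σ)),
    Jeq (Tm.lam (Tm.app (Tm.wk M) (Tm.app (Tm.wk N) (Tm.var .vz))))
        (Tm.lam (Tm.var .vz)) ∧
    Jeq (Tm.lam (Tm.app (Tm.wk N) (Tm.app (Tm.wk M) (Tm.var .vz))))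
        (Tm.lam (Tm.var .vz))
-- The ENF grammar as predicates on types:
-- Base b ::= p | d;  DNF d ::= c₁+(⋯+cₙ) (n≥2);
-- CNF c ::= (c₁→b₁)×(⋯×(cₙ→bₙ)) (n≥0, the empty product being the unit type).
mutual
inductive IsBase : Ty → Prop
  | prp (p : ℕ) : IsBase (.atom p)
  | bd {t : Ty} : IsDNF t → IsBase t

inductive IsDNF : Ty → Prop
  | two {c1 c2 : Ty} : IsCNF c1 → IsCNF c2 → IsDNF (.sum c1 c2)
  | dis {c d : Ty} : IsCNF c → IsDNF d → IsDNF (.sum c d)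

inductive IsCNF : Ty → Prop
  | top : IsCNF .unit
  | con {c b t : Ty} : IsCNF c → IsBase b → IsCNF t → IsCNF (.prod (.arr c b) t)
end

/-- ENF ∋ e ::= c | d. -/
def IsENF (t : Ty) : Prop := IsCNF t ∨ IsDNF t
-- The restricted equational theory =βη^e on lambda terms of ENF type
-- (Figure 3 of the paper): the βη-axioms specialized to ENF types,
-- together with the permutation axioms (η_π^e) and (η_λ^e).
inductive EqE : ∀ {Γ : Ctx} {A : Ty}, Tm Γ A → Tm Γ A → Prop
  | refl {Γ A} (t : Tm Γ A) : EqE t t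
  | symm {Γ A} {t u : Tm Γ A} : EqE t u → EqE u t
  | trans {Γ A} {t u v : Tm Γ A} : EqE t u → EqE u v → EqE t v
  | lam_congr {Γ A B} {t t' : Tm (A :: Γ) B} : EqE t t' → EqE (Tm.lam t) (Tm.lam t')
  | app_congr {Γ A B} {t t' : Tm Γ (Ty.arr A B)} {u u' : Tm Γ A} :
      EqE t t' → EqE u u' → EqE (Tm.app t u) (Tm.app t' u')
  | pair_congr {Γ A B} {t t' : Tm Γ A} {u u' : Tm Γ B} :
      EqE t t' → EqE u u' → EqE (Tm.pair t u) (Tm.pair t' u')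
  | fst_congr {Γ A B} {t t' : Tm Γ (Ty.prod A B)} : EqE t t' → EqE (Tm.fst t) (Tm.fst t')
  | snd_congr {Γ A B} {t t' : Tm Γ (Ty.prod A B)} : EqE t t' → EqE (Tm.snd t) (Tm.snd t')
  | inl_congr {Γ A B} {t t' : Tm Γ A} : EqE t t' → EqE (Tm.inl (B := B) t) (Tm.inl t')
  | inr_congr {Γ A B} {t t' : Tm Γ B} : EqE t t' → EqE (Tm.inr (A := A) t) (Tm.inr t')
  | case_congr {Γ A B C} {s s' : Tm Γ (Ty.sum A B)} {t t' : Tm (A :: Γ) C} {u u' : Tm (B :: Γ) C} :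
      EqE s s' → EqE t t' → EqE u u' → EqE (Tm.case s t u) (Tm.case s' t' u')
  -- (β→^e): the abstracted variable has CNF type c, the body has base type b
  | beta_arr {Γ c b} (hc : IsCNF c) (hb : IsBase b) (t : Tm (c :: Γ) b) (u : Tm Γ c) :
      EqE (Tm.app (Tm.lam t) u) (Tm.subst1 t u)
  -- (β×^e): pairs are of type (c→b)×c₀
  | beta_fst {Γ c b c₀} (hc : IsCNF c) (hb : IsBase b) (hc₀ : IsCNF c₀)
      (t : Tm Γ (Ty.arr c b)) (u : Tm Γ c₀) : EqE (Tm.fst (Tm.pair t u)) t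
  | beta_snd {Γ c b c₀} (hc : IsCNF c) (hb : IsBase b) (hc₀ : IsCNF c₀)
      (t : Tm Γ (Ty.arr c b)) (u : Tm Γ c₀) : EqE (Tm.snd (Tm.pair t u)) u
  -- (β+^e): the scrutinee has type c+d, the result has ENF type e
  | beta_inl {Γ c d e} (hc : IsCNF c) (hd : IsDNF d) (he : IsENF e)
      (m : Tm Γ c) (n₁ : Tm (c :: Γ) e) (n₂ : Tm (d :: Γ) e) :
      EqE (Tm.case (Tm.inl m) n₁ n₂) (Tm.subst1 n₁ m)
  | beta_inr {Γ c d e} (hc : IsCNF c) (hd : IsDNF d) (he : IsENF e)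
      (m : Tm Γ d) (n₁ : Tm (c :: Γ) e) (n₂ : Tm (d :: Γ) e) :
      EqE (Tm.case (Tm.inr m) n₁ n₂) (Tm.subst1 n₂ m)
  -- (η→^e): at type c→b only
  | eta_arr {Γ c b} (hc : IsCNF c) (hb : IsBase b) (t : Tm Γ (Ty.arr c b)) :
      EqE t (Tm.lam (Tm.app (Tm.wk t) (Tm.var .vz)))
  -- (η×^e): at type (c→b)×c₀ only
  | eta_prod {Γ c b c₀} (hc : IsCNF c) (hb : IsBase b) (hc₀ : IsCNF c₀)
      (t : Tm Γ (Ty.prod (Ty.arr c b) c₀)) : EqE t (Tm.pair (Tm.fst t) (Tm.snd t))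
  -- (η+^e): the term substituted into has base type b, the scrutinee has DNF (sum) type d
  | eta_sum {Γ c d b} (hd : IsDNF (Ty.sum c d)) (hb : IsBase b)
      (n : Tm (Ty.sum c d :: Γ) b) (m : Tm Γ (Ty.sum c d)) :
      EqE (Tm.subst1 n m)
          (Tm.case m (Tm.subst Sub.inlTop n) (Tm.subst Sub.inrTop n))
  -- (η_π^e): πᵢ δ(M, x₁.N₁, x₂.N₂) = δ(M, x₁.πᵢN₁, x₂.πᵢN₂)
  | eta_pi_fst {Γ A B C D} (m : Tm Γ (Ty.sum A B))
      (n₁ : Tm (A :: Γ) (Ty.prod C D)) (n₂ : Tm (B :: Γ) (Ty.prod C D)) :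
      EqE (Tm.fst (Tm.case m n₁ n₂)) (Tm.case m (Tm.fst n₁) (Tm.fst n₂))
  | eta_pi_snd {Γ A B C D} (m : Tm Γ (Ty.sum A B))
      (n₁ : Tm (A :: Γ) (Ty.prod C D)) (n₂ : Tm (B :: Γ) (Ty.prod C D)) :
      EqE (Tm.snd (Tm.case m n₁ n₂)) (Tm.case m (Tm.snd n₁) (Tm.snd n₂))
  -- (η_λ^e): λy. δ(M, x₁.N₁, x₂.N₂) = δ(M, x₁.λy.N₁, x₂.λy.N₂)  (y ∉ FV(M),
  -- expressed via weakening of M and exchange of the two topmost variables)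
  | eta_lam {Γ A B Y C} (m : Tm Γ (Ty.sum A B))
      (n₁ : Tm (Y :: A :: Γ) C) (n₂ : Tm (Y :: B :: Γ) C) :
      EqE (Tm.lam (Tm.case (Tm.wk m) (Tm.rename Ren.swap n₁) (Tm.rename Ren.swap n₂)))
          (Tm.case m (Tm.lam n₁) (Tm.lam n₂))

/-! For a DNF type `e` the equation is an instance of (η+^e). A CNF type `e` embeds by `ι₁` into
the DNF type `D = e + (e + e)`, where (η+^e) is available: applied to `ι₁ N` it gives
`ι₁ N{M/x} = δ(M, x₁.ι₁N₁, x₂.ι₁N₂)`, and applied to `ι₁ δ(x, x₁.N₁, x₂.N₂)` and followed by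
(β+^e) it moves `ι₁` inside `δ(M, …)`. Finally `ι₁` is cancelled by (β+^e) at the type `D`,
whose right summand `e + e` is a DNF as that axiom requires. -/

theorem Sub.lift_var {Γ : Ctx} {A : Ty} :
    Sub.lift (A := A) (fun _ x => .var x : Sub Γ Γ) = fun _ x => .var x := by
  funext B x; cases x <;> rfl

namespace Tm

theorem rename_rename {Γ Δ Θ : Ctx} {A : Ty} (t : Tm Γ A) (ρ : Ren Γ Δ) (ρ' : Ren Δ Θ) :
    (t.rename ρ).rename ρ' = t.rename fun B x => ρ' B (ρ B x) := by
  have lift_comp : ∀ {Γ Δ Θ : Ctx} {A : Ty} (ρ : Ren Γ Δ) (ρ' : Ren Δ Θ),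
      (fun B x => Ren.lift ρ' B (Ren.lift ρ B x)) = Ren.lift (A := A) fun B x => ρ' B (ρ B x) :=
    fun _ _ => by funext B x; cases x <;> rfl
  induction t generalizing Δ Θ <;> simp only [rename, *]

theorem subst_rename {Γ Δ Θ : Ctx} {A : Ty} (t : Tm Γ A) (ρ : Ren Γ Δ) (σ : Sub Δ Θ) :
    (t.rename ρ).subst σ = t.subst fun B x => σ B (ρ B x) := by
  have lift_comp : ∀ {Γ Δ Θ : Ctx} {A : Ty} (ρ : Ren Γ Δ) (σ : Sub Δ Θ),
      (fun B x => Sub.lift σ B (Ren.lift ρ B x)) = Sub.lift (A := A) fun B x => σ B (ρ B x) :=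
    fun _ _ => by funext B x; cases x <;> rfl
  induction t generalizing Δ Θ <;> simp only [rename, subst, *]

theorem rename_subst {Γ Δ Θ : Ctx} {A : Ty} (t : Tm Γ A) (σ : Sub Γ Δ) (ρ : Ren Δ Θ) :
    (t.subst σ).rename ρ = t.subst fun B x => (σ B x).rename ρ := by
  have lift_comp : ∀ {Γ Δ Θ : Ctx} {A : Ty} (σ : Sub Γ Δ) (ρ : Ren Δ Θ),
      (fun B x => (Sub.lift σ B x).rename (Ren.lift ρ)) =
        Sub.lift (A := A) fun B x => (σ B x).rename ρ := by
    intro _ _ _ _ σ ρ; funext B x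
    cases x with
    | vz => rfl
    | vs y => exact (rename_rename _ _ _).trans (rename_rename (σ B y) ρ fun _ v => .vs v).symm
  induction t generalizing Δ Θ <;> simp only [rename, subst, *]

theorem subst_subst {Γ Δ Θ : Ctx} {A : Ty} (t : Tm Γ A) (σ : Sub Γ Δ) (τ : Sub Δ Θ) :
    (t.subst σ).subst τ = t.subst fun B x => (σ B x).subst τ := by
  have lift_comp : ∀ {Γ Δ Θ : Ctx} {A : Ty} (σ : Sub Γ Δ) (τ : Sub Δ Θ),
      (fun B x => (Sub.lift σ B x).subst (Sub.lift τ)) =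
        Sub.lift (A := A) fun B x => (σ B x).subst τ := by
    intro _ _ _ _ σ τ; funext B x
    cases x with
    | vz => rfl
    | vs y => exact (subst_rename _ _ _).trans (rename_subst (σ B y) τ fun _ v => .vs v).symm
  induction t generalizing Δ Θ <;> simp only [subst, *]

theorem subst_var {Γ : Ctx} {A : Ty} (t : Tm Γ A) : t.subst (fun _ x => .var x) = t := by
  induction t <;> simp only [subst, Sub.lift_var, *]

def wkUnder {Γ : Ctx} {A B C : Ty} (t : Tm (A :: Γ) C) : Tm (A :: B :: Γ) C :=
  t.rename (Ren.lift fun _ v => .vs v)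

theorem subst_lift_wkUnder {Γ Δ : Ctx} {A B C : Ty} (σ : Sub (B :: Γ) Δ) (t : Tm (A :: Γ) C) :
    (t.wkUnder (B := B)).subst (Sub.lift σ) = t.subst (Sub.lift fun _ x => σ _ (.vs x)) := by
  rw [wkUnder, subst_rename]
  congr 1; funext B x; cases x <;> rfl

theorem subst_lift_wkUnder_eq_self {Γ : Ctx} {A B C : Ty} {σ : Sub (B :: Γ) Γ}
    (hσ : ∀ D x, σ D (.vs x) = .var x) (t : Tm (A :: Γ) C) :
    (t.wkUnder (B := B)).subst (Sub.lift σ) = t := by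
  simp only [subst_lift_wkUnder, hσ, Sub.lift_var, subst_var]

theorem subst1_vz_subst_lift_wkUnder_eq_self {Γ : Ctx} {A B C : Ty} {σ : Sub (B :: Γ) (A :: Γ)}
    (hσ : ∀ D x, σ D (.vs x) = .var (.vs x)) (t : Tm (A :: Γ) C) :
    ((t.wkUnder (B := B)).subst (Sub.lift σ)).subst1 (.var .vz) = t := by
  simp only [subst_lift_wkUnder, hσ, subst1, subst_subst]
  conv_rhs => rw [← subst_var t]
  congr 1; funext D x; cases x <;> rfl

end Tm

namespace EqE

theorem inl_case {Γ : Ctx} {c d e e' : Ty} (hc : IsCNF c) (hd : IsDNF d) (he : IsENF e)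
    (hb : IsBase (Ty.sum e e')) (M : Tm Γ (Ty.sum c d)) (N₁ : Tm (c :: Γ) e)
    (N₂ : Tm (d :: Γ) e) :
    EqE (Tm.inl (B := e') (Tm.case M N₁ N₂)) (Tm.case M (Tm.inl N₁) (Tm.inl N₂)) := by
  have h := eta_sum (.dis hc hd) hb (Tm.inl (Tm.case (Tm.var .vz) N₁.wkUnder N₂.wkUnder)) M
  simp only [Tm.subst1, Tm.subst] at h
  rw [Tm.subst_lift_wkUnder_eq_self (fun _ _ => rfl),
    Tm.subst_lift_wkUnder_eq_self (fun _ _ => rfl)] at h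
  refine h.trans (case_congr (refl M) (inl_congr ?_) (inl_congr ?_))
  · refine (beta_inl hc hd he _ _ _).trans ?_
    rw [Tm.subst1_vz_subst_lift_wkUnder_eq_self (σ := Sub.inlTop) fun _ _ => rfl]
    exact refl N₁
  · refine (beta_inr hc hd he _ _ _).trans ?_
    rw [Tm.subst1_vz_subst_lift_wkUnder_eq_self (σ := Sub.inrTop) fun _ _ => rfl]
    exact refl N₂

theorem inl_cancel {Γ : Ctx} {e : Ty} (he : IsCNF e) {u v : Tm Γ e}
    (h : EqE (Tm.inl (B := Ty.sum e e) u) (Tm.inl v)) : EqE u v :=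
  have strip (w : Tm Γ e) := beta_inl he (.two he he) (.inl he) w (Tm.var .vz)
    (Tm.case (Tm.var .vz) (Tm.var .vz) (Tm.var .vz))
  (strip u).symm.trans ((case_congr h (refl _) (refl _)).trans (strip v))

end EqE

/-- For every ENF type `e`, the unrestricted sum eta equation
`N{M/x} = δ(M, x₁.N{ι₁x₁/x}, x₂.N{ι₂x₂/x})` — where `x` is a variable of sum
type `c+d` with `c` a CNF and `d` a DNF — is derivable in the restricted
theory =βη^e. -/
theorem eta_sum_derivable {Γ : Ctx} {c d e : Ty}
    (hc : IsCNF c) (hd : IsDNF d) (he : IsENF e)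
    (N : Tm (Ty.sum c d :: Γ) e) (M : Tm Γ (Ty.sum c d)) :
    EqE (Tm.subst1 N M)
        (Tm.case M (Tm.subst Sub.inlTop N) (Tm.subst Sub.inrTop N)) := by
  rcases he with he | he
  · have hb : IsBase (Ty.sum e (Ty.sum e e)) := .bd (.dis he (.two he he))
    refine EqE.inl_cancel he ?_
    exact (EqE.eta_sum (.dis hc hd) hb (Tm.inl N) M).trans
      (EqE.inl_case hc hd (.inl he) hb M _ _).symm
  · exact EqE.eta_sum (.dis hc hd) (.bd he) N M

end ExpLog
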